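/- Let e : ℝ^n → ℝ^ℓ and x_d ∈ ℝ^n, and define the slope function s(x, x_d) = ‖e(x) - e(x_d)‖ / ‖x - x_d‖ for x ≠ x_d. Suppose e is L-Lipschitz on the closed ball B_r(x_d), and suppose the maximum slope S = max over x ∈ B_r(x_d) of s(x, x_d) is achieved at some point x* with ‖x* - x_d‖ ≥ τ for some 0 < τ ≤ r. Let N ⊆ B_r(x_d) be an ε-cover of B_r(x_d) (every point of B_r(x_d) is within distance ε of some point of N), and let Ŝ = max over x' ∈ N, x' ≠ x_d, of s(x', x_d). Then S ≤ Ŝ(1 + ε/τ) + Lε/τ. -/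
import Mathlib


/-- Slope estimation from an ε-cover: the true maximal slope `S`, achieved at a
point at distance at least `τ` from `x_d`, is bounded by the empirical maximal
slope `Ŝ` over the cover, up to a margin. -/
theorem stmt_1 {n ℓ : ℕ} (e : (Fin n → ℝ) → (Fin ℓ → ℝ)) (x_d xstar : Fin n → ℝ)
    (N : Set (Fin n → ℝ)) (L S Shat τ ε r : ℝ)
    (hτ : 0 < τ) (hτr : τ ≤ r) (hε : 0 ≤ ε) (hL : 0 ≤ L)
    -- e is L-Lipschitz on the closed ball B_r(x_d)
    (hLip : ∀ x y : Fin n → ℝ, ‖x - x_d‖ ≤ r → ‖y - x_d‖ ≤ r →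
      ‖e x - e y‖ ≤ L * ‖x - y‖)
    -- S is the maximum slope, achieved at x* with ‖x* - x_d‖ ≥ τ
    (hxstar : ‖xstar - x_d‖ ≤ r) (hxstarτ : τ ≤ ‖xstar - x_d‖)
    (hSval : S = ‖e xstar - e x_d‖ / ‖xstar - x_d‖)
    (hSmax : ∀ x : Fin n → ℝ, ‖x - x_d‖ ≤ r → x ≠ x_d →
      ‖e x - e x_d‖ / ‖x - x_d‖ ≤ S)
    -- N is an ε-cover of the ball, contained in the ball
    (hNball : ∀ x' ∈ N, ‖x' - x_d‖ ≤ r)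
    (hcover : ∀ x : Fin n → ℝ, ‖x - x_d‖ ≤ r → ∃ x' ∈ N, ‖x - x'‖ ≤ ε)
    -- the cover point for x* can be chosen distinct from x_d
    (hcoverstar : ∃ x' ∈ N, ‖xstar - x'‖ ≤ ε ∧ x' ≠ x_d)
    -- Ŝ is (an upper bound on, in particular the max of) the empirical slopes
    (hShat : ∀ x' ∈ N, x' ≠ x_d → ‖e x' - e x_d‖ / ‖x' - x_d‖ ≤ Shat) :
    S ≤ Shat * (1 + ε / τ) + L * ε / τ := by
  obtain ⟨x', hx'N, hx'c, hx'ne⟩ := hcoverstar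
  have hd0 : 0 < ‖xstar - x_d‖ := lt_of_lt_of_le hτ hxstarτ
  have hx'd0 : 0 < ‖x' - x_d‖ := by
    rw [norm_pos_iff]; exact sub_ne_zero.mpr hx'ne
  have hslope := hShat x' hx'N hx'ne
  have hShat0 : 0 ≤ Shat :=
    le_trans (div_nonneg (norm_nonneg _) (norm_nonneg _)) hslope
  have h1 : ‖e x' - e x_d‖ ≤ Shat * ‖x' - x_d‖ := (div_le_iff₀ hx'd0).mp hslope
  have h2 : ‖e xstar - e x'‖ ≤ L * ε :=
    le_trans (hLip xstar x' hxstar (hNball x' hx'N))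
      (mul_le_mul_of_nonneg_left hx'c hL)
  have h3 : ‖x' - x_d‖ ≤ ‖xstar - x_d‖ + ε := by
    calc ‖x' - x_d‖ = ‖(x' - xstar) + (xstar - x_d)‖ := by
          rw [sub_add_sub_cancel]
      _ ≤ ‖x' - xstar‖ + ‖xstar - x_d‖ := norm_add_le _ _
      _ = ‖xstar - x'‖ + ‖xstar - x_d‖ := by rw [norm_sub_rev]
      _ ≤ ‖xstar - x_d‖ + ε := by linarith
  have hE : ‖e xstar - e x_d‖ ≤ Shat * ‖xstar - x_d‖ + (Shat + L) * ε := by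
    calc ‖e xstar - e x_d‖ = ‖(e xstar - e x') + (e x' - e x_d)‖ := by
          rw [sub_add_sub_cancel]
      _ ≤ ‖e xstar - e x'‖ + ‖e x' - e x_d‖ := norm_add_le _ _
      _ ≤ L * ε + Shat * (‖xstar - x_d‖ + ε) := by
          have := mul_le_mul_of_nonneg_left h3 hShat0
          linarith
      _ = Shat * ‖xstar - x_d‖ + (Shat + L) * ε := by ring
  have hstep : S ≤ Shat + (Shat + L) * ε / ‖xstar - x_d‖ := by
    rw [hSval, div_le_iff₀ hd0]
    have hne : ‖xstar - x_d‖ ≠ 0 := ne_of_gt hd0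
    field_simp
    nlinarith [hE]
  have hdiv : (Shat + L) * ε / ‖xstar - x_d‖ ≤ (Shat + L) * ε / τ := by
    gcongr
  have : Shat * (1 + ε / τ) + L * ε / τ = Shat + (Shat + L) * ε / τ := by ring
  linarith
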